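/- The multivariate formal power series A^c_d(u; p_1, …, p_d) := Σ_{r ≥ 1} Σ_{s ∈ ℤ_{≥0}^d} a^c_d(r;s) · u^r · p_1^{s_1}⋯p_d^{s_d} over ℚ satisfies the functional equation A^c_d = u + u·A^c_d + Δ(p)·(A^c_d + (A^c_d)²), where Δ(p) := 1 − (1−p_1)(1−p_2)⋯(1−p_d). -/

import Mathlib

namespace MultiOp

mutual
inductive Atom (d : ℕ) : Type where
  | star : Atom d
  | op : Fin d → Mon d → Atom d
inductive Mon (d : ℕ) : Type where
  | single : Atom d → Mon d
  | cons : Atom d → Mon d → Mon d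
end

mutual
def Atom.deg {d : ℕ} : Atom d → ℕ
  | .star => 1
  | .op _ v => v.deg
def Mon.deg {d : ℕ} : Mon d → ℕ
  | .single a => a.deg
  | .cons a v => a.deg + v.deg
end

mutual
def Atom.mult {d : ℕ} : Atom d → Fin d → ℕ
  | .star, _ => 0
  | .op i v, j => (if i = j then 1 else 0) + v.mult j
def Mon.mult {d : ℕ} : Mon d → Fin d → ℕ
  | .single a, j => a.mult j
  | .cons a v, j => a.mult j + v.mult j
end

noncomputable def a (d r : ℕ) (s : Fin d → ℕ) : ℕ :=
  Nat.card {v : Mon d // v.deg = r ∧ v.mult = s}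

noncomputable def b (d ℓ n : ℕ) : ℕ :=
  Nat.card {v : Mon d // ℓ * v.deg + 2 * (∑ i, v.mult i) = n}

noncomputable def A (d : ℕ) : MvPowerSeries (Option (Fin d)) ℚ :=
  fun e => (a d (e none) (fun i => e (some i)) : ℚ)

noncomputable def B (d ℓ : ℕ) : PowerSeries ℚ :=
  PowerSeries.mk fun n => (b d ℓ n : ℚ)

def narayana (n k : ℕ) : ℚ := (n.choose k * n.choose (k + 1) : ℚ) / n

/-- Concatenation (the associative multiplication) of monomials. -/
def Mon.mul {d : ℕ} : Mon d → Mon d → Mon d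
  | .single a, w => .cons a w
  | .cons a v, w => .cons a (v.mul w)

/-- Application of the unary operator `P i` to a monomial. -/
def Mon.P {d : ℕ} (i : Fin d) (v : Mon d) : Mon d := .single (.op i v)

/- Canonical monomials: along every maximal nested chain of unary operators the
operator indices are weakly increasing, i.e. a subword `P i (P j (⋯))` occurs only
when `i ≤ j`. -/
mutual
inductive AtomCanon : {d : ℕ} → Atom d → Prop where
  | star {d : ℕ} : AtomCanon (Atom.star : Atom d)
  | op {d : ℕ} (i : Fin d) (v : Mon d) : MonCanon v →
      (∀ (j : Fin d) (w : Mon d), v = Mon.single (Atom.op j w) → i ≤ j) →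
      AtomCanon (Atom.op i v)
inductive MonCanon : {d : ℕ} → Mon d → Prop where
  | single {d : ℕ} (a : Atom d) : AtomCanon a → MonCanon (Mon.single a)
  | cons {d : ℕ} (a : Atom d) (v : Mon d) : AtomCanon a → MonCanon v →
      MonCanon (Mon.cons a v)
end

/-- `a^c_d(r;s)`: the number of canonical monomials of degree `r`
and multiplicity vector `s`. -/
noncomputable def ac (d r : ℕ) (s : Fin d → ℕ) : ℕ :=
  Nat.card {v : Mon d // MonCanon v ∧ v.deg = r ∧ v.mult = s}

/-- The multigraded generating function
`A^c_d(u;p) = Σ_{r ≥ 1} Σ_{s} a^c_d(r;s) uʳ p₁^{s₁}⋯p_d^{s_d}`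
(the variable `none` is `u` and `some i` is `pᵢ`). -/
noncomputable def Ac (d : ℕ) : MvPowerSeries (Option (Fin d)) ℚ :=
  fun e => (ac d (e none) (fun i => e (some i)) : ℚ)

/-!
Weight a monomial by `u^deg · p^mult`, so that `Ac d` is the generating function of canonical
monomials; write `A` for it, `T` for the generating function of canonical atoms and `C_k` for that of
canonical monomials whose outermost operator, if any, has index `≥ k`. Splitting off the first atom
gives `A = T + T·A`, and `C_d = u + T·A` because a monomial without outer operator is `∗` or a
proper product. As `P_k(v)` is canonical exactly when `v ∈ C_k`, we get `C_k = C_{k+1} + p_k·C_k`,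
hence `C_d = ∏ (1 - p_i)·A`. Eliminating `T = u + Δ(p)·A` yields the functional equation.
-/

open Set MvPowerSeries

section WeightedSets

variable {α β γ σ : Type*}

noncomputable def genFun (w : α → σ →₀ ℕ) (s : Set α) : MvPowerSeries σ ℚ :=
  fun e => ((s ∩ w ⁻¹' {e}).ncard : ℚ)

variable {w : α → σ →₀ ℕ}

theorem coeff_genFun (s : Set α) (e : σ →₀ ℕ) :
    coeff e (genFun w s) = (s ∩ w ⁻¹' {e}).ncard := rfl

theorem genFun_singleton (x : α) : genFun w {x} = monomial (w x) 1 := by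
  classical
  ext e
  rw [coeff_genFun, coeff_monomial]
  split_ifs with h
  · rw [singleton_inter_of_mem (s := w ⁻¹' {e}) h.symm, ncard_singleton, Nat.cast_one]
  · rw [singleton_inter_of_notMem (s := w ⁻¹' {e}) (Ne.symm h), ncard_empty, Nat.cast_zero]

theorem genFun_union (hw : ∀ e, (w ⁻¹' {e}).Finite) {s t : Set α} (hst : Disjoint s t) :
    genFun w (s ∪ t) = genFun w s + genFun w t := by
  ext e
  rw [map_add, coeff_genFun, coeff_genFun, coeff_genFun, union_inter_distrib_right,
    ncard_union_eq (hst.mono inter_subset_left inter_subset_left)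
      ((hw e).subset inter_subset_right) ((hw e).subset inter_subset_right), Nat.cast_add]

theorem genFun_image {f : α → α} {s : Set α} {c : σ →₀ ℕ} (hf : InjOn f s)
    (hwf : ∀ x ∈ s, w (f x) = c + w x) : genFun w (f '' s) = monomial c 1 * genFun w s := by
  ext e
  rw [coeff_monomial_mul, coeff_genFun]
  split_ifs with hce
  · rw [one_mul, coeff_genFun, ← (hf.mono inter_subset_left).ncard_image]
    congr 2
    ext y
    constructor
    · rintro ⟨⟨x, hx, rfl⟩, hxe⟩
      refine ⟨x, ⟨hx, ?_⟩, rfl⟩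
      simp only [mem_preimage, mem_singleton_iff, hwf x hx] at hxe ⊢
      rw [← hxe, add_tsub_cancel_left]
    · rintro ⟨x, ⟨hx, hxe⟩, rfl⟩
      refine ⟨mem_image_of_mem f hx, ?_⟩
      simp only [mem_preimage, mem_singleton_iff, hwf x hx] at hxe ⊢
      rw [hxe, add_tsub_cancel_of_le hce]
  · rw [eq_empty_of_forall_notMem (s := f '' s ∩ w ⁻¹' {e}), ncard_empty, Nat.cast_zero]
    rintro y ⟨⟨x, hx, rfl⟩, hxe⟩
    simp only [mem_preimage, mem_singleton_iff, hwf x hx] at hxe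
    exact hce (hxe ▸ le_self_add)

theorem genFun_image2 {wα : α → σ →₀ ℕ} {wβ : β → σ →₀ ℕ} {wγ : γ → σ →₀ ℕ}
    (hwα : ∀ e, (wα ⁻¹' {e}).Finite) (hwβ : ∀ e, (wβ ⁻¹' {e}).Finite)
    {m : α → β → γ} {s : Set α} {t : Set β} (hm : InjOn (Function.uncurry m) (s ×ˢ t))
    (hwm : ∀ x ∈ s, ∀ y ∈ t, wγ (m x y) = wα x + wβ y) :
    genFun wγ (image2 m s t) = genFun wα s * genFun wβ t := by
  classical
  ext e
  set P := {q ∈ s ×ˢ t | wα q.1 + wβ q.2 = e}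
  have hP : image2 m s t ∩ wγ ⁻¹' {e} = Function.uncurry m '' P := by
    ext z
    constructor
    · rintro ⟨⟨x, hx, y, hy, rfl⟩, hz⟩
      exact ⟨(x, y), ⟨⟨hx, hy⟩, (hwm x hx y hy).symm.trans hz⟩, rfl⟩
    · rintro ⟨⟨x, y⟩, ⟨⟨hx, hy⟩, hxy⟩, rfl⟩
      exact ⟨mem_image2_of_mem hx hy, (hwm x hx y hy).trans hxy⟩
  let split : P ≃ Σ p : Finset.HasAntidiagonal.antidiagonal e,
      ↥(s ∩ wα ⁻¹' {p.1.1}) × ↥(t ∩ wβ ⁻¹' {p.1.2}) :=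
    { toFun := fun q => ⟨⟨(wα q.1.1, wβ q.1.2), Finset.HasAntidiagonal.mem_antidiagonal.2 q.2.2⟩,
        ⟨q.1.1, q.2.1.1, rfl⟩, ⟨q.1.2, q.2.1.2, rfl⟩⟩
      invFun := fun x => ⟨(x.2.1, x.2.2), ⟨x.2.1.2.1, x.2.2.2.1⟩,
        (congrArg₂ (· + ·) x.2.1.2.2 x.2.2.2.2).trans
          (Finset.HasAntidiagonal.mem_antidiagonal.1 x.1.2)⟩
      left_inv := fun q => rfl
      right_inv := by
        rintro ⟨⟨⟨e₁, e₂⟩, he⟩, ⟨x, hx, hxe⟩, ⟨y, hy, hye⟩⟩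
        obtain rfl : wα x = e₁ := hxe
        obtain rfl : wβ y = e₂ := hye
        rfl }
  have : ∀ e, Finite ↥(s ∩ wα ⁻¹' {e}) := fun e => ((hwα e).subset inter_subset_right).to_subtype
  have : ∀ e, Finite ↥(t ∩ wβ ⁻¹' {e}) := fun e => ((hwβ e).subset inter_subset_right).to_subtype
  rw [coeff_genFun, coeff_mul, hP, (hm.mono fun q hq => hq.1).ncard_image,
    ← Nat.card_coe_set_eq, Nat.card_congr split, Nat.card_sigma,
    ← Finset.sum_coe_sort (Finset.HasAntidiagonal.antidiagonal e)]
  push_cast [Nat.card_prod, Nat.card_coe_set_eq, coeff_genFun]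
  rfl

end WeightedSets

section Monomials

variable {d : ℕ}

noncomputable def Mon.wt (v : Mon d) : Option (Fin d) →₀ ℕ :=
  Finsupp.equivFunOnFinite.symm fun o => o.elim v.deg v.mult

@[simp] theorem Mon.wt_none (v : Mon d) : v.wt none = v.deg := rfl

@[simp] theorem Mon.wt_some (v : Mon d) (i : Fin d) : v.wt (some i) = v.mult i := rfl

theorem Mon.wt_eq_iff {v : Mon d} {e : Option (Fin d) →₀ ℕ} :
    v.wt = e ↔ v.deg = e none ∧ v.mult = fun i => e (some i) := by
  simp [Finsupp.ext_iff, Option.forall, funext_iff]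

theorem Mon.wt_single_star : (Mon.single (.star : Atom d)).wt = Finsupp.single none 1 := by
  ext (_ | i) <;> simp [Mon.deg, Atom.deg, Mon.mult, Atom.mult]

theorem Mon.wt_P (i : Fin d) (v : Mon d) :
    (Mon.P i v).wt = Finsupp.single (some i) 1 + v.wt := by
  ext (_ | j) <;> simp [Mon.P, Mon.deg, Atom.deg, Mon.mult, Atom.mult, Finsupp.single_apply]

theorem Mon.wt_cons (a : Atom d) (v : Mon d) :
    (Mon.cons a v).wt = (Mon.single a).wt + v.wt := by
  ext (_ | j) <;> simp [Mon.deg, Mon.mult]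

theorem Mon.wt_mul : ∀ v w : Mon d, (v.mul w).wt = v.wt + w.wt
  | .single a, w => Mon.wt_cons a w
  | .cons a v, w => by rw [Mon.mul, Mon.wt_cons, Mon.wt_mul v w, Mon.wt_cons, add_assoc]

mutual
theorem Atom.one_le_deg : ∀ a : Atom d, 1 ≤ a.deg
  | .star => le_rfl
  | .op _ v => v.one_le_deg
theorem Mon.one_le_deg : ∀ v : Mon d, 1 ≤ v.deg
  | .single a => a.one_le_deg
  | .cons a _ => le_add_right a.one_le_deg
end

theorem Mon.one_le_degree_wt (v : Mon d) : 1 ≤ v.wt.degree :=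
  v.one_le_deg.trans (Finsupp.le_degree none v.wt)

theorem Mon.finite_setOf_degree_wt_le (n : ℕ) : {v : Mon d | v.wt.degree ≤ n}.Finite := by
  induction n with
  | zero =>
    convert finite_empty
    ext v
    simp only [mem_ofPred_eq, mem_empty_iff_false, iff_false, not_le]
    exact v.one_le_degree_wt
  | succ n ih =>
    have hatoms : (Mon.single ⁻¹' {v : Mon d | v.wt.degree ≤ n}).Finite :=
      ih.preimage (fun _ _ _ _ h => Mon.single.inj h)
    refine (((finite_singleton (Mon.single .star)).union (finite_univ.image2 Mon.P ih)).union
      (hatoms.image2 Mon.cons ih)).subset ?_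
    rintro (⟨_ | ⟨i, u⟩⟩ | ⟨a, u⟩) hv
    · exact .inl (.inl rfl)
    · refine .inl (.inr ⟨i, trivial, u, ?_, rfl⟩)
      rw [mem_ofPred_eq, ← Mon.P, Mon.wt_P, map_add, Finsupp.degree_single] at hv
      simp only [mem_ofPred_eq]
      omega
    · have ha := (Mon.single a).one_le_degree_wt
      have hu := u.one_le_degree_wt
      rw [mem_ofPred_eq, Mon.wt_cons, map_add] at hv
      exact .inr ⟨a, by simp only [mem_preimage, mem_ofPred_eq]; omega, u, by
        simp only [mem_ofPred_eq]; omega, rfl⟩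

theorem Mon.finite_wt_preimage_singleton (e : Option (Fin d) →₀ ℕ) :
    (Mon.wt ⁻¹' {e} : Set (Mon d)).Finite :=
  (Mon.finite_setOf_degree_wt_le e.degree).subset fun v (hv : v.wt = e) =>
    show v.wt.degree ≤ e.degree from hv ▸ le_rfl

theorem monCanon_single_iff {a : Atom d} : MonCanon (Mon.single a) ↔ AtomCanon a :=
  ⟨fun h => by cases h with | single _ ha => exact ha, MonCanon.single a⟩

theorem monCanon_cons_iff {a : Atom d} {v : Mon d} :
    MonCanon (Mon.cons a v) ↔ AtomCanon a ∧ MonCanon v :=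
  ⟨fun h => by cases h with | cons _ _ ha hv => exact ⟨ha, hv⟩, fun h => MonCanon.cons a v h.1 h.2⟩

def canonOuterGe (d k : ℕ) : Set (Mon d) :=
  {v | MonCanon v ∧ ∀ i u, v = Mon.P i u → k ≤ (i : ℕ)}

theorem monCanon_P_iff {i : Fin d} {v : Mon d} : MonCanon (Mon.P i v) ↔ v ∈ canonOuterGe d i :=
  ⟨fun h => by
    rw [Mon.P, monCanon_single_iff] at h
    cases h with | op _ _ hv hle => exact ⟨hv, hle⟩,
    fun ⟨hv, hle⟩ => .single _ (.op i v hv hle)⟩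

def canonAtoms (d : ℕ) : Set (Mon d) := Mon.single '' {a | AtomCanon a}

theorem Mon.P_injective (i : Fin d) : Function.Injective (Mon.P i) := fun _ _ h => by
  simpa [Mon.P] using h

theorem canonOuterGe_zero : canonOuterGe d 0 = {v | MonCanon v} := by
  ext v
  exact and_iff_left fun _ _ _ => Nat.zero_le _

theorem canonOuterGe_eq_union_image_P {k : ℕ} (hk : k < d) :
    canonOuterGe d k = canonOuterGe d (k + 1) ∪ Mon.P ⟨k, hk⟩ '' canonOuterGe d k := by
  ext v
  constructor
  · rintro ⟨hv, hout⟩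
    by_cases hP : ∃ u, v = Mon.P ⟨k, hk⟩ u
    · obtain ⟨u, rfl⟩ := hP
      exact .inr ⟨u, monCanon_P_iff.1 hv, rfl⟩
    · refine .inl ⟨hv, fun i u hvu => (hout i u hvu).lt_of_ne fun hki => hP ⟨u, ?_⟩⟩
      rwa [show (⟨k, hk⟩ : Fin d) = i from Fin.ext hki]
  · rintro (⟨hv, hout⟩ | ⟨u, hu, rfl⟩)
    · exact ⟨hv, fun i u h => k.le_succ.trans (hout i u h)⟩
    · refine ⟨monCanon_P_iff.2 hu, fun i u' h => ?_⟩
      simp only [Mon.P, Mon.single.injEq, Atom.op.injEq] at h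
      rw [← h.1]

theorem disjoint_canonOuterGe_succ_image_P {k : ℕ} (hk : k < d) :
    Disjoint (canonOuterGe d (k + 1)) (Mon.P ⟨k, hk⟩ '' canonOuterGe d k) := by
  rw [disjoint_left]
  rintro _ ⟨_, hout⟩ ⟨u, _, rfl⟩
  exact Nat.not_succ_le_self k (hout _ u rfl)

theorem canonOuterGe_self_eq_union :
    canonOuterGe d d = {Mon.single .star} ∪ image2 Mon.mul (canonAtoms d) {v | MonCanon v} := by
  ext v
  constructor
  · rintro ⟨hv, hout⟩
    rcases v with ⟨_ | ⟨i, u⟩⟩ | ⟨a, u⟩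
    · exact .inl rfl
    · exact absurd (hout i u rfl) (not_le.2 i.isLt)
    · obtain ⟨ha, hu⟩ := monCanon_cons_iff.1 hv
      exact .inr ⟨_, ⟨a, ha, rfl⟩, u, hu, rfl⟩
  · rintro (rfl | ⟨_, ⟨a, ha, rfl⟩, u, hu, rfl⟩)
    · exact ⟨.single _ .star, fun i u h => by cases h⟩
    · exact ⟨monCanon_cons_iff.2 ⟨ha, hu⟩, fun i u h => by cases h⟩

theorem disjoint_single_star_image2_mul :
    Disjoint {Mon.single .star} (image2 Mon.mul (canonAtoms d) {v | MonCanon v}) := by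
  rw [disjoint_singleton_left]
  rintro ⟨_, ⟨a, -, rfl⟩, u, -, h⟩
  cases h

theorem setOf_monCanon_eq_union :
    {v : Mon d | MonCanon v} = canonAtoms d ∪ image2 Mon.mul (canonAtoms d) {v | MonCanon v} := by
  ext v
  constructor
  · intro hv
    rcases v with a | ⟨a, u⟩
    · exact .inl ⟨a, monCanon_single_iff.1 hv, rfl⟩
    · obtain ⟨ha, hu⟩ := monCanon_cons_iff.1 hv
      exact .inr ⟨_, ⟨a, ha, rfl⟩, u, hu, rfl⟩
  · rintro (⟨a, ha, rfl⟩ | ⟨_, ⟨a, ha, rfl⟩, u, hu, rfl⟩)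
    · exact .single a ha
    · exact .cons a u ha hu

theorem disjoint_canonAtoms_image2_mul :
    Disjoint (canonAtoms d) (image2 Mon.mul (canonAtoms d) {v | MonCanon v}) := by
  rw [disjoint_left]
  rintro _ ⟨a, -, rfl⟩ ⟨_, ⟨b, -, rfl⟩, u, -, h⟩
  cases h

theorem injOn_mul_canonAtoms (s : Set (Mon d)) :
    InjOn (Function.uncurry Mon.mul) (canonAtoms d ×ˢ s) := by
  rintro ⟨_, u⟩ ⟨⟨a, -, rfl⟩, -⟩ ⟨_, u'⟩ ⟨⟨a', -, rfl⟩, -⟩ h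
  obtain ⟨rfl, rfl⟩ := Mon.cons.inj h
  rfl

theorem genFun_image2_mul_canonAtoms :
    genFun Mon.wt (image2 Mon.mul (canonAtoms d) {v | MonCanon v}) =
      genFun Mon.wt (canonAtoms d) * genFun Mon.wt {v : Mon d | MonCanon v} :=
  genFun_image2 Mon.finite_wt_preimage_singleton Mon.finite_wt_preimage_singleton
    (injOn_mul_canonAtoms _) fun v _ w _ => Mon.wt_mul v w

theorem genFun_setOf_monCanon :
    genFun Mon.wt {v : Mon d | MonCanon v} = genFun Mon.wt (canonAtoms d) +
      genFun Mon.wt (canonAtoms d) * genFun Mon.wt {v : Mon d | MonCanon v} := by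
  conv_lhs => rw [setOf_monCanon_eq_union]
  rw [genFun_union Mon.finite_wt_preimage_singleton disjoint_canonAtoms_image2_mul,
    genFun_image2_mul_canonAtoms]

theorem genFun_canonOuterGe_self :
    genFun Mon.wt (canonOuterGe d d) =
      X none + genFun Mon.wt (canonAtoms d) * genFun Mon.wt {v : Mon d | MonCanon v} := by
  rw [canonOuterGe_self_eq_union,
    genFun_union Mon.finite_wt_preimage_singleton disjoint_single_star_image2_mul,
    genFun_image2_mul_canonAtoms, genFun_singleton, Mon.wt_single_star, ← X_def]

theorem genFun_canonOuterGe_succ {k : ℕ} (hk : k < d) :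
    (1 - X (some ⟨k, hk⟩)) * genFun Mon.wt (canonOuterGe d k) =
      genFun Mon.wt (canonOuterGe d (k + 1)) := by
  have h := congrArg (genFun Mon.wt) (canonOuterGe_eq_union_image_P hk)
  rw [genFun_union Mon.finite_wt_preimage_singleton (disjoint_canonOuterGe_succ_image_P hk),
    genFun_image (Mon.P_injective _).injOn (fun u _ => Mon.wt_P _ u), ← X_def] at h
  linear_combination h

theorem prod_filter_lt_one_sub_X_mul_genFun_setOf_monCanon {k : ℕ} (hk : k ≤ d) :
    (∏ i ∈ Finset.univ.filter (fun i : Fin d => (i : ℕ) < k), (1 - X (some i))) *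
      genFun Mon.wt {v : Mon d | MonCanon v} = genFun Mon.wt (canonOuterGe d k) := by
  induction k with
  | zero => simp [canonOuterGe_zero]
  | succ k ih =>
    have hk' : k < d := hk
    have hfilter : Finset.univ.filter (fun i : Fin d => (i : ℕ) < k + 1) =
        insert ⟨k, hk'⟩ (Finset.univ.filter fun i : Fin d => (i : ℕ) < k) := by
      ext i
      simp only [Finset.mem_filter, Finset.mem_univ, true_and, Finset.mem_insert, Fin.ext_iff]
      omega
    rw [hfilter, Finset.prod_insert (by simp), mul_assoc, ih hk'.le, genFun_canonOuterGe_succ]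

theorem prod_one_sub_X_mul_genFun_setOf_monCanon (d : ℕ) :
    (∏ i : Fin d, (1 - X (some i))) * genFun Mon.wt {v : Mon d | MonCanon v} =
      genFun Mon.wt (canonOuterGe d d) := by
  rw [← prod_filter_lt_one_sub_X_mul_genFun_setOf_monCanon le_rfl,
    Finset.filter_true_of_mem fun i _ => i.isLt]

theorem Ac_eq_genFun (d : ℕ) : Ac d = genFun Mon.wt {v : Mon d | MonCanon v} := by
  ext e
  rw [coeff_genFun, ← Nat.card_coe_set_eq]
  exact congrArg Nat.cast (Nat.card_congr (Equiv.subtypeEquivRight fun v =>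
    and_congr_right' Mon.wt_eq_iff.symm))

end Monomials

open MvPowerSeries in
/-- `A^c_d` satisfies `A^c_d = u + u·A^c_d + Δ(p)·(A^c_d + (A^c_d)²)`,
where `Δ(p) = 1 − (1−p₁)⋯(1−p_d)`. -/
theorem Ac_functional_equation (d : ℕ) (hd : 1 ≤ d) :
    Ac d = X (none : Option (Fin d)) + X (none : Option (Fin d)) * Ac d
        + (1 - ∏ i : Fin d, (1 - X (some i))) * (Ac d + (Ac d) ^ 2) := by
  have hcanon := genFun_setOf_monCanon (d := d)
  have hprod := prod_one_sub_X_mul_genFun_setOf_monCanon d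
  rw [genFun_canonOuterGe_self] at hprod
  rw [Ac_eq_genFun]
  linear_combination hcanon + (1 + genFun Mon.wt {v : Mon d | MonCanon v}) * (hprod - hcanon)

end MultiOp
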